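/- arXiv:2406.02416 — 2 statements merged into one kernel-verified Lean document; each statement's English description precedes it below -/
import Mathlib

section
/- For all real x, x̂ > 0 and all integers n ≥ 1, Γ(n+x)/Γ(x) ≥ c·x^a, where a = (ψ(n+x̂) − ψ(x̂))·x̂ and c = [Γ(n+x̂)/Γ(x̂)]·x̂^{−a}; the bound holds with equality when x = x̂. -/
/-!
For `x > 0`, `Γ(n + x) / Γ(x) = ∏_{k < n} (x + k)` and
`(ψ(n + x̂) − ψ(x̂)) x̂ = ∑_{k < n} x̂ / (x̂ + k)`, so the bound splits into one factor per `k`.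
Each factor is Bernoulli's inequality `t ^ p ≤ 1 + p (t − 1)` for `p = x̂ / (x̂ + k) ∈ [0, 1]`
and `t = x / x̂`, multiplied by `x̂ + k`:
`(x̂ + k) (x / x̂) ^ (x̂ / (x̂ + k)) ≤ x + k`.
-/

/-- The digamma function `ψ = Γ'/Γ = (log Γ)'`. -/
noncomputable def digamma (x : ℝ) : ℝ := deriv (fun y => Real.log (Real.Gamma y)) x

open Real Finset Filter Topology

theorem digamma_add_one {x : ℝ} (hx : ∀ m : ℕ, x ≠ -m) :
    digamma (x + 1) = digamma x + x⁻¹ := by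
  have hx0 : x ≠ 0 := by simpa using hx 0
  have hΓ : Gamma x ≠ 0 := Gamma_ne_zero hx
  have hlog : (fun y => log (Gamma (y + 1))) =ᶠ[𝓝 x] fun y => log (Gamma y) + log y := by
    filter_upwards [eventually_ne_nhds hx0,
      (differentiableAt_Gamma hx).continuousAt.eventually_ne hΓ] with y hy hΓy
    rw [Gamma_add_one hy, log_mul hy hΓy, add_comm]
  rw [digamma, ← deriv_comp_add_const, hlog.deriv_eq,
    deriv_fun_add ((differentiableAt_Gamma hx).log hΓ) (differentiableAt_log hx0), deriv_log]
  rfl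

theorem digamma_nat_add (n : ℕ) {x : ℝ} (hx : ∀ m : ℕ, x ≠ -m) :
    digamma (n + x) = digamma x + ∑ k ∈ range n, (x + k)⁻¹ := by
  induction n with
  | zero => simp
  | succ n ih =>
    have hnx : ∀ m : ℕ, (n + x : ℝ) ≠ -m := fun m h => hx (n + m) (by push_cast; linarith)
    rw [Nat.cast_succ, add_right_comm, digamma_add_one hnx, ih, sum_range_succ, add_assoc,
      add_comm (n : ℝ) x]

theorem Gamma_nat_add_div_Gamma (n : ℕ) {x : ℝ} (hx : ∀ m : ℕ, x ≠ -m) :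
    Gamma (n + x) / Gamma x = ∏ k ∈ range n, (x + k) := by
  induction n with
  | zero => simp [div_self (Gamma_ne_zero hx)]
  | succ n ih =>
    have hnx : (n + x : ℝ) ≠ 0 := fun h => hx n (by linarith)
    rw [Nat.cast_succ, add_right_comm, Gamma_add_one hnx, mul_div_assoc, ih, prod_range_succ,
      add_comm (n : ℝ) x, mul_comm]

theorem add_mul_rpow_div_le_add {x y k : ℝ} (hx : 0 ≤ x) (hy : 0 < y) (hk : 0 ≤ k) :
    (y + k) * (x / y) ^ (y / (y + k)) ≤ x + k := by
  have hyk : 0 < y + k := by linarith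
  have hbern := rpow_one_add_le_one_add_mul_self (s := x / y - 1)
    (by linarith [div_nonneg hx hy.le]) (p := y / (y + k)) (by positivity)
    ((div_le_one hyk).mpr (by linarith))
  rw [add_sub_cancel] at hbern
  calc (y + k) * (x / y) ^ (y / (y + k))
      ≤ (y + k) * (1 + y / (y + k) * (x / y - 1)) := mul_le_mul_of_nonneg_left hbern hyk.le
    _ = x + k := by field_simp; ring

theorem gamma_ratio_power_bound_general (n : ℕ) (x xhat : ℝ)
    (hx : 0 < x) (hxhat : 0 < xhat) :
    Real.Gamma (n + x) / Real.Gamma x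
        ≥ (Real.Gamma (n + xhat) / Real.Gamma xhat
              * xhat ^ (-((digamma (n + xhat) - digamma xhat) * xhat)))
            * x ^ ((digamma (n + xhat) - digamma xhat) * xhat)
      ∧ (x = xhat →
          Real.Gamma (n + x) / Real.Gamma x
            = (Real.Gamma (n + xhat) / Real.Gamma xhat
                  * xhat ^ (-((digamma (n + xhat) - digamma xhat) * xhat)))
                * x ^ ((digamma (n + xhat) - digamma xhat) * xhat)) := by
  have not_neg_nat : ∀ {y : ℝ}, 0 < y → ∀ m : ℕ, y ≠ -m := fun hy m h => by
    linarith [m.cast_nonneg (α := ℝ)]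
  set a := (digamma (n + xhat) - digamma xhat) * xhat
  have ha : a = ∑ k ∈ range n, xhat / (xhat + k) := by
    simp only [a, digamma_nat_add n (not_neg_nat hxhat), add_sub_cancel_left, sum_mul,
      inv_mul_eq_div]
  have hrhs : Gamma (n + xhat) / Gamma xhat * xhat ^ (-a) * x ^ a
      = Gamma (n + xhat) / Gamma xhat * (x / xhat) ^ a := by
    rw [div_rpow hx.le hxhat.le, rpow_neg hxhat.le]
    ring
  refine ⟨?_, fun h => ?_⟩
  · rw [ge_iff_le, hrhs, Gamma_nat_add_div_Gamma n (not_neg_nat hx),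
      Gamma_nat_add_div_Gamma n (not_neg_nat hxhat), ha, rpow_sum_of_pos (by positivity),
      ← prod_mul_distrib]
    exact prod_le_prod (fun k _ => by positivity)
      fun k _ => add_mul_rpow_div_le_add hx.le hxhat k.cast_nonneg
  · subst h
    rw [hrhs, div_self hx.ne', one_rpow, mul_one]

/-- Power lower bound (Minka): for `x, x̂ > 0` and integer `n ≥ 1`,
`Γ(n+x)/Γ(x) ≥ c · x^a` where `a = (ψ(n+x̂) − ψ(x̂)) x̂` and
`c = Γ(n+x̂)/Γ(x̂) · x̂^{−a}`, with equality when `x = x̂`. -/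
theorem gamma_ratio_power_bound (n : ℕ) (hn : 1 ≤ n) (x xhat : ℝ)
    (hx : 0 < x) (hxhat : 0 < xhat) :
    Real.Gamma (n + x) / Real.Gamma x
        ≥ (Real.Gamma (n + xhat) / Real.Gamma xhat
              * xhat ^ (-((digamma (n + xhat) - digamma xhat) * xhat)))
            * x ^ ((digamma (n + xhat) - digamma xhat) * xhat)
      ∧ (x = xhat →
          Real.Gamma (n + x) / Real.Gamma x
            = (Real.Gamma (n + xhat) / Real.Gamma xhat
                  * xhat ^ (-((digamma (n + xhat) - digamma xhat) * xhat)))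
                * x ^ ((digamma (n + xhat) - digamma xhat) * xhat)) :=
  gamma_ratio_power_bound_general n x xhat hx hxhat
end

section
/- Combining the tangent bounds Γ(x)/Γ(n+x) ≥ Γ(x̂)/Γ(n+x̂)·e^{(x̂−x)b} (b = ψ(n+x̂)−ψ(x̂)) applied at x = α₀ and Γ(n+x)/Γ(x) ≥ c·x^a applied at each x = α_j, the Dirichlet-Multinomial log-likelihood log p(c|n,α) is bounded below by a function of the form D + (1 − α₀)·b + Σⱼ aⱼ log αⱼ, with equality at α = α̂, where aⱼ = (ψ(c_j + α̂_j) − ψ(α̂_j))·α̂_j, b = ψ(n + α̂₀) − ψ(α̂₀), and D does not depend on α. -/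
open Finset Real

namespace Real

theorem log_le_log_add_sub_div {x y : ℝ} (hx : 0 < x) (hy : 0 < y) :
    log y ≤ log x + (y - x) / x := by
  have h := log_le_sub_one_of_pos (div_pos hy hx)
  rw [log_div hy.ne' hx.ne', div_sub_one hx.ne'] at h
  linarith

theorem mul_log_le_log_mul_add_one_sub {t r : ℝ} (ht₀ : 0 ≤ t) (ht₁ : t ≤ 1)
    (hr : 0 < r) :
    t * log r ≤ log (t * r + (1 - t)) := by
  have h := strictConcaveOn_log_Ioi.concaveOn.2 (Set.mem_Ioi.2 hr) (Set.mem_Ioi.2 one_pos)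
    ht₀ (sub_nonneg.2 ht₁) (add_sub_cancel t 1)
  simpa only [smul_eq_mul, log_one, mul_one, mul_zero, add_zero] using h

/-- The tangent bound for the convex function `s ↦ log (exp s + k)` at `s = log x`. -/
theorem div_add_mul_log_sub_le {x y k : ℝ} (hx : 0 < x) (hy : 0 < y) (hk : 0 ≤ k) :
    x / (x + k) * (log y - log x) ≤ log (y + k) - log (x + k) := by
  have hxk : 0 < x + k := by linarith
  have h := mul_log_le_log_mul_add_one_sub (t := x / (x + k)) (by positivity)
    ((div_le_one hxk).2 (by linarith)) (div_pos hy hx)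
  have hmix : x / (x + k) * (y / x) + (1 - x / (x + k)) = (y + k) / (x + k) := by
    field_simp
    ring
  rwa [hmix, log_div (by linarith) hxk.ne', log_div hy.ne' hx.ne'] at h

theorem Gamma_nat_add (m : ℕ) {x : ℝ} (hx : 0 < x) :
    Gamma (m + x) = (∏ k ∈ range m, (x + k)) * Gamma x := by
  induction m with
  | zero => simp
  | succ m ih =>
    rw [Nat.cast_succ, add_right_comm, Gamma_add_one (by positivity), ih, prod_range_succ]
    ring

end Real

noncomputable def logRising (m : ℕ) (x : ℝ) : ℝ := ∑ k ∈ range m, log (x + k)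

section logRising

variable (m : ℕ) {x y : ℝ}

theorem log_Gamma_nat_add (hx : 0 < x) : log (Gamma (m + x)) = logRising m x + log (Gamma x) := by
  rw [Gamma_nat_add m hx, log_mul (prod_pos fun k _ => by positivity).ne'
    (Gamma_pos_of_pos hx).ne', log_prod fun k _ => by positivity, logRising]

theorem hasDerivAt_logRising (hx : 0 < x) :
    HasDerivAt (logRising m) (∑ k ∈ range m, (x + k)⁻¹) x := by
  refine HasDerivAt.fun_sum fun k _ => ?_
  simpa using ((hasDerivAt_id x).add_const (k : ℝ)).log (by positivity)

theorem digamma_nat_add_sub (hx : 0 < x) :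
    digamma (m + x) - digamma x = ∑ k ∈ range m, (x + k)⁻¹ := by
  have hlogGamma : DifferentiableAt ℝ (fun y => log (Gamma y)) x :=
    (differentiableAt_Gamma fun j => by linarith [(j.cast_nonneg : (0 : ℝ) ≤ j)]).log
      (Gamma_pos_of_pos hx).ne'
  have hshift : (fun y => log (Gamma (m + y))) =ᶠ[nhds x]
      fun y => logRising m y + log (Gamma y) := by
    filter_upwards [Ioi_mem_nhds hx] with y hy using log_Gamma_nat_add m hy
  have hderiv := ((hasDerivAt_logRising m hx).add hlogGamma.hasDerivAt).congr_of_eventuallyEq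
    hshift
  rw [digamma, ← deriv_comp_const_add, hderiv.deriv, digamma]
  ring

theorem logRising_le_add_mul_sub (hx : 0 < x) (hy : 0 < y) :
    logRising m y ≤ logRising m x + (y - x) * ∑ k ∈ range m, (x + k)⁻¹ := by
  rw [logRising, logRising, mul_sum, ← sum_add_distrib]
  refine sum_le_sum fun k _ => ?_
  have h := log_le_log_add_sub_div (x := x + k) (y := y + k) (by positivity) (by positivity)
  rwa [add_sub_add_right_eq_sub, div_eq_mul_inv] at h

theorem add_mul_log_sub_le_logRising (hx : 0 < x) (hy : 0 < y) :
    logRising m x + x * (∑ k ∈ range m, (x + k)⁻¹) * (log y - log x) ≤ logRising m y := by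
  rw [logRising, logRising, mul_sum, sum_mul, ← sum_add_distrib]
  refine sum_le_sum fun k _ => ?_
  have h := div_add_mul_log_sub_le hx hy (k.cast_nonneg : (0 : ℝ) ≤ k)
  rw [div_eq_mul_inv] at h
  linarith

end logRising

section DirichletMultinomial

variable {ι : Type*} [Fintype ι] (n : ℕ) (c : ι → ℕ)

noncomputable def dirichletMultinomialLogLik (α : ι → ℝ) : ℝ :=
  log ((Gamma (∑ j, α j) * Gamma ((n : ℝ) + 1) / Gamma ((n : ℝ) + ∑ j, α j))
    * ∏ j, Gamma ((c j : ℝ) + α j) / (Gamma (α j) * Gamma ((c j : ℝ) + 1)))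

theorem dirichletMultinomialLogLik_eq [Nonempty ι] {α : ι → ℝ} (hα : ∀ j, 0 < α j) :
    dirichletMultinomialLogLik n c α
      = log (Gamma ((n : ℝ) + 1)) - ∑ j, log (Gamma ((c j : ℝ) + 1))
        - logRising n (∑ j, α j) + ∑ j, logRising (c j) (α j) := by
  have hα₀ : 0 < ∑ j, α j := sum_pos (fun j _ => hα j) univ_nonempty
  have hΓ : ∀ {x : ℝ}, 0 < x → Gamma x ≠ 0 := fun hx => (Gamma_pos_of_pos hx).ne'
  have hfactor : ∀ j, log (Gamma ((c j : ℝ) + α j) / (Gamma (α j) * Gamma ((c j : ℝ) + 1)))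
      = logRising (c j) (α j) - log (Gamma ((c j : ℝ) + 1)) := fun j => by
    rw [log_div (hΓ (by positivity [hα j])) (mul_ne_zero (hΓ (hα j)) (hΓ (by positivity))),
      log_mul (hΓ (hα j)) (hΓ (by positivity)), log_Gamma_nat_add _ (hα j)]
    ring
  have hfactor_ne : ∀ j, Gamma ((c j : ℝ) + α j) / (Gamma (α j) * Gamma ((c j : ℝ) + 1)) ≠ 0 :=
    fun j => div_ne_zero (hΓ (by positivity [hα j]))
      (mul_ne_zero (hΓ (hα j)) (hΓ (by positivity)))
  have hnum : Gamma (∑ j, α j) * Gamma ((n : ℝ) + 1) ≠ 0 :=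
    mul_ne_zero (hΓ hα₀) (hΓ (by positivity))
  rw [dirichletMultinomialLogLik,
    log_mul (div_ne_zero hnum (hΓ (by positivity))) (prod_ne_zero_iff.2 fun j _ => hfactor_ne j),
    log_div hnum (hΓ (by positivity)), log_mul (hΓ hα₀) (hΓ (by positivity)),
    log_prod fun j _ => hfactor_ne j,
    sum_congr rfl fun j _ => hfactor j, sum_sub_distrib, log_Gamma_nat_add _ hα₀]
  ring

theorem dirichletMultinomialLogLik_tangent_le [Nonempty ι] {α αhat : ι → ℝ}
    (hα : ∀ j, 0 < α j) (hαhat : ∀ j, 0 < αhat j) :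
    dirichletMultinomialLogLik n c αhat
        + (∑ j, αhat j - ∑ j, α j) * ∑ k ∈ range n, ((∑ j, αhat j) + k)⁻¹
        + ∑ j, αhat j * (∑ k ∈ range (c j), (αhat j + k)⁻¹)
            * (log (α j) - log (αhat j))
      ≤ dirichletMultinomialLogLik n c α := by
  have hsum : ∀ β : ι → ℝ, (∀ j, 0 < β j) → 0 < ∑ j, β j :=
    fun β hβ => sum_pos (fun j _ => hβ j) univ_nonempty
  have htotal := logRising_le_add_mul_sub n (hsum αhat hαhat) (hsum α hα)
  have hparts := sum_le_sum fun j (_ : j ∈ univ) =>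
    add_mul_log_sub_le_logRising (c j) (hαhat j) (hα j)
  rw [sum_add_distrib] at hparts
  rw [dirichletMultinomialLogLik_eq n c hα, dirichletMultinomialLogLik_eq n c hαhat]
  linarith

end DirichletMultinomial

theorem dirichletMultinomial_minorization_general (C n : ℕ)
    (c : Fin C → ℕ)
    (αhat : Fin C → ℝ) (hαhat : ∀ j, 0 < αhat j) :
    ∃ D : ℝ,
      (∀ α : Fin C → ℝ, (∀ j, 0 < α j) →
        D + (1 - ∑ j, α j) * (digamma ((n : ℝ) + ∑ j, αhat j) - digamma (∑ j, αhat j))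
            + ∑ j, ((digamma ((c j : ℝ) + αhat j) - digamma (αhat j)) * αhat j)
                * Real.log (α j)
          ≤ Real.log ((Real.Gamma (∑ j, α j) * Real.Gamma ((n : ℝ) + 1)
                / Real.Gamma ((n : ℝ) + ∑ j, α j))
              * ∏ j, Real.Gamma ((c j : ℝ) + α j)
                  / (Real.Gamma (α j) * Real.Gamma ((c j : ℝ) + 1))))
      ∧ Real.log ((Real.Gamma (∑ j, αhat j) * Real.Gamma ((n : ℝ) + 1)
              / Real.Gamma ((n : ℝ) + ∑ j, αhat j))
            * ∏ j, Real.Gamma ((c j : ℝ) + αhat j)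
                / (Real.Gamma (αhat j) * Real.Gamma ((c j : ℝ) + 1)))
          = D + (1 - ∑ j, αhat j)
                * (digamma ((n : ℝ) + ∑ j, αhat j) - digamma (∑ j, αhat j))
            + ∑ j, ((digamma ((c j : ℝ) + αhat j) - digamma (αhat j)) * αhat j)
                * Real.log (αhat j) := by
  set b := digamma ((n : ℝ) + ∑ j, αhat j) - digamma (∑ j, αhat j)
  set a := fun j => (digamma ((c j : ℝ) + αhat j) - digamma (αhat j)) * αhat j
  refine ⟨dirichletMultinomialLogLik n c αhat - (1 - ∑ j, αhat j) * b
    - ∑ j, a j * log (αhat j), fun α hα => ?_, by unfold dirichletMultinomialLogLik; ring⟩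
  change _ ≤ dirichletMultinomialLogLik n c α
  rcases isEmpty_or_nonempty (Fin C) with _ | _
  · rw [Subsingleton.elim α αhat]
    linarith
  have htangent := dirichletMultinomialLogLik_tangent_le n c hα hαhat
  rw [← digamma_nat_add_sub n (sum_pos (fun j _ => hαhat j) univ_nonempty)] at htangent
  simp only [← digamma_nat_add_sub _ (hαhat _), mul_comm (αhat _), mul_sub,
    sum_sub_distrib] at htangent
  linarith

/-- Minorization step of Minka's fixed-point iteration: the Dirichlet-Multinomial
log-likelihood is bounded below by `D + (1 − α₀) b + Σⱼ aⱼ log αⱼ`, with equality at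
`α = α̂`, where `aⱼ = (ψ(cⱼ + α̂ⱼ) − ψ(α̂ⱼ)) α̂ⱼ`, `b = ψ(n + α̂₀) − ψ(α̂₀)`, and `D`
does not depend on `α`. -/
theorem dirichletMultinomial_minorization (C n : ℕ) (hn : 1 ≤ n)
    (c : Fin C → ℕ) (hc : ∑ j, c j = n)
    (αhat : Fin C → ℝ) (hαhat : ∀ j, 0 < αhat j) :
    ∃ D : ℝ,
      (∀ α : Fin C → ℝ, (∀ j, 0 < α j) →
        D + (1 - ∑ j, α j) * (digamma ((n : ℝ) + ∑ j, αhat j) - digamma (∑ j, αhat j))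
            + ∑ j, ((digamma ((c j : ℝ) + αhat j) - digamma (αhat j)) * αhat j)
                * Real.log (α j)
          ≤ Real.log ((Real.Gamma (∑ j, α j) * Real.Gamma ((n : ℝ) + 1)
                / Real.Gamma ((n : ℝ) + ∑ j, α j))
              * ∏ j, Real.Gamma ((c j : ℝ) + α j)
                  / (Real.Gamma (α j) * Real.Gamma ((c j : ℝ) + 1))))
      ∧ Real.log ((Real.Gamma (∑ j, αhat j) * Real.Gamma ((n : ℝ) + 1)
              / Real.Gamma ((n : ℝ) + ∑ j, αhat j))
            * ∏ j, Real.Gamma ((c j : ℝ) + αhat j)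
                / (Real.Gamma (αhat j) * Real.Gamma ((c j : ℝ) + 1)))
          = D + (1 - ∑ j, αhat j)
                * (digamma ((n : ℝ) + ∑ j, αhat j) - digamma (∑ j, αhat j))
            + ∑ j, ((digamma ((c j : ℝ) + αhat j) - digamma (αhat j)) * αhat j)
                * Real.log (αhat j) :=
  dirichletMultinomial_minorization_general C n c αhat hαhat
end
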